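/- arXiv:2101.07369 — 3 statements merged into one kernel-verified Lean document; each statement's English description precedes it below -/
import Mathlib

section
/- Let z = x + iy with 0 ≤ y ≤ x and set a = √(x² − y²). Then Re(erf(z)) = erf(a) + (2e^{−a²}/√π) ∫_a^x [cos(2t√(t²−a²)) + t·sin(2t√(t²−a²))/√(t²−a²)] dt. -/
open Complex MeasureTheory

/-- The error function, `erf z = (2/√π) ∫₀^z e^{-u²} du`, integrated along the
segment from `0` to `z` (the integrand is entire, so the path is immaterial). -/
noncomputable def erf (z : ℂ) : ℂ :=
  (2 / Real.sqrt Real.pi : ℝ) * ∫ t in (0:ℝ)..1, z * Complex.exp (-((t : ℂ) * z) ^ 2)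

/-- The complementary error function, `erfc z = (2/√π) ∫_z^∞ e^{-u²} du`,
integrated along the horizontal ray from `z` to `+∞`. -/
noncomputable def erfc (z : ℂ) : ℂ :=
  (2 / Real.sqrt Real.pi : ℝ) * ∫ t in Set.Ioi (0:ℝ), Complex.exp (-(z + (t : ℂ)) ^ 2)

/-!
`erf` is holomorphic with derivative `(2/√π) e^{-z²}`, since `e^{-z²}` has a primitive. Follow
`Re erf` along the hyperbola branch `t ↦ t + i√(t² - a²)`, `a ≤ t ≤ x`, which runs from `a` to
`x + iy`: there `-u² = -a² - 2it√(t² - a²)`, so `e^{-u²}` has constant modulus `e^{-a²}`, and the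
chain rule turns the derivative of `Re erf` along the path into the integrand of the formula.
The fundamental theorem of calculus concludes; the integrand is bounded by `1 + 2t²` because
`|sin u| ≤ |u|`.
-/

theorem integral_mul_comp_ofReal_mul_eq_sub {f g : ℂ → ℂ} (hg : ∀ w, HasDerivAt g (f w) w)
    (hf : Continuous f) (z : ℂ) :
    ∫ t in (0:ℝ)..1, z * f (t * z) = g z - g 0 := by
  have hline (t : ℝ) : HasDerivAt (fun t : ℝ => (t : ℂ) * z) z t := by
    simpa using (hasDerivAt_id t).ofReal_comp.mul_const z
  have hpath (t : ℝ) : HasDerivAt (fun t : ℝ => g (t * z)) (z * f (t * z)) t :=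
    (hg _).scomp t (hline t)
  rw [intervalIntegral.integral_eq_sub_of_hasDerivAt (fun t _ => hpath t)
    (by apply Continuous.intervalIntegrable; fun_prop)]
  simp

theorem hasDerivAt_integral_mul_comp_ofReal_mul {f : ℂ → ℂ} (hf : Differentiable ℂ f) (z : ℂ) :
    HasDerivAt (fun z => ∫ t in (0:ℝ)..1, z * f (t * z)) (f z) z := by
  obtain ⟨g, hg⟩ := hf.isExactOn_univ
  have hg' (w : ℂ) : HasDerivAt g (f w) w := hg w (Set.mem_univ w)
  simpa only [integral_mul_comp_ofReal_mul_eq_sub hg' hf.continuous] using (hg' z).sub_const (g 0)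

theorem hasDerivAt_erf (z : ℂ) :
    HasDerivAt erf ((2 / Real.sqrt Real.pi : ℝ) * Complex.exp (-z ^ 2)) z :=
  (hasDerivAt_integral_mul_comp_ofReal_mul (f := fun w => Complex.exp (-w ^ 2))
    (by fun_prop) z).const_mul _

theorem differentiable_erf : Differentiable ℂ erf := fun z => (hasDerivAt_erf z).differentiableAt

theorem HasDerivAt.re {f : ℝ → ℂ} {f' : ℂ} {t : ℝ} (h : HasDerivAt f f' t) :
    HasDerivAt (fun t => (f t).re) f'.re t :=
  reCLM.hasFDerivAt.comp_hasDerivAt t h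

theorem hasDerivAt_hyperbola {a t : ℝ} (ht : a ^ 2 < t ^ 2) :
    HasDerivAt (fun t : ℝ => (t : ℂ) + Real.sqrt (t ^ 2 - a ^ 2) * I)
      (1 + (t / Real.sqrt (t ^ 2 - a ^ 2) : ℝ) * I) t := by
  have hsqrt : HasDerivAt (fun t => Real.sqrt (t ^ 2 - a ^ 2))
      (t / Real.sqrt (t ^ 2 - a ^ 2)) t := by
    convert ((hasDerivAt_pow 2 t).sub_const (a ^ 2)).sqrt (by linarith) using 1
    field_simp
    ring
  refine ((hasDerivAt_id t).ofReal_comp.add (hsqrt.ofReal_comp.mul_const I)).congr_deriv ?_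
  simp

theorem cexp_neg_sq_add_mul_I {a t s : ℝ} (hs : s ^ 2 = t ^ 2 - a ^ 2) :
    Complex.exp (-((t : ℂ) + s * I) ^ 2) =
      Real.exp (-a ^ 2) * (Real.cos (2 * t * s) - Real.sin (2 * t * s) * I) := by
  have hsq : -((t : ℂ) + s * I) ^ 2 = (-a ^ 2 : ℝ) + (-(2 * t * s) : ℝ) * I := by
    have hs' : (s : ℂ) ^ 2 = t ^ 2 - a ^ 2 := by exact_mod_cast hs
    push_cast
    linear_combination hs' - (s : ℂ) ^ 2 * I_sq
  rw [hsq, Complex.exp_add, ← ofReal_exp, exp_mul_I, ← ofReal_cos, ← ofReal_sin, Real.cos_neg,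
    Real.sin_neg]
  push_cast
  ring

theorem hasDerivAt_re_erf_hyperbola {a t : ℝ} (ht : a ^ 2 < t ^ 2) :
    HasDerivAt (fun t : ℝ => (erf (t + Real.sqrt (t ^ 2 - a ^ 2) * I)).re)
      (2 * Real.exp (-a ^ 2) / Real.sqrt Real.pi *
        (Real.cos (2 * t * Real.sqrt (t ^ 2 - a ^ 2)) +
          t * Real.sin (2 * t * Real.sqrt (t ^ 2 - a ^ 2)) / Real.sqrt (t ^ 2 - a ^ 2))) t := by
  have hpath := ((hasDerivAt_erf _).scomp t (hasDerivAt_hyperbola ht)).re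
  set s := Real.sqrt (t ^ 2 - a ^ 2)
  have hs : 0 < s := Real.sqrt_pos.2 (by linarith)
  have hs2 : s ^ 2 = t ^ 2 - a ^ 2 := Real.sq_sqrt (by linarith)
  convert hpath using 1
  · rfl
  rw [smul_eq_mul, cexp_neg_sq_add_mul_I hs2]
  simp only [mul_re, add_re, sub_re, mul_im, add_im, sub_im, one_re, one_im, ofReal_re, ofReal_im,
    I_re, I_im]
  field_simp
  ring

theorem abs_mul_sin_two_mul_mul_div_le (t s : ℝ) :
    |t * Real.sin (2 * t * s) / s| ≤ 2 * t ^ 2 := by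
  rcases eq_or_ne s 0 with rfl | hs
  · simp only [div_zero, abs_zero]; positivity
  rw [abs_div, div_le_iff₀ (abs_pos.2 hs), abs_mul]
  calc |t| * |Real.sin (2 * t * s)| ≤ |t| * |2 * t * s| :=
        mul_le_mul_of_nonneg_left Real.abs_sin_le_abs (abs_nonneg t)
    _ = 2 * t ^ 2 * |s| := by rw [abs_mul, abs_mul, abs_two, ← sq_abs t]; ring

theorem intervalIntegrable_cos_add_mul_sin_div (a b : ℝ) {s : ℝ → ℝ} (hs : Measurable s) :
    IntervalIntegrable (fun t => Real.cos (2 * t * s t) + t * Real.sin (2 * t * s t) / s t)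
      volume a b := by
  refine IntervalIntegrable.mono_fun' (g := fun t => 1 + 2 * t ^ 2)
    (by apply Continuous.intervalIntegrable; fun_prop) (Measurable.aestronglyMeasurable
      (by fun_prop)) (Filter.Eventually.of_forall fun t => ?_)
  exact (norm_add_le _ _).trans
    (add_le_add (Real.abs_cos_le_one _) (abs_mul_sin_two_mul_mul_div_le t (s t)))

theorem re_erf_eq (x y : ℝ) (hy : 0 ≤ y) (hyx : y ≤ x) (a : ℝ)
    (ha : a = Real.sqrt (x ^ 2 - y ^ 2)) :
    (erf (x + y * Complex.I)).re =
      (erf (a : ℂ)).re +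
        (2 * Real.exp (-a ^ 2) / Real.sqrt Real.pi) *
          ∫ t in a..x, (Real.cos (2 * t * Real.sqrt (t ^ 2 - a ^ 2)) +
            t * Real.sin (2 * t * Real.sqrt (t ^ 2 - a ^ 2)) / Real.sqrt (t ^ 2 - a ^ 2)) := by
  have ha0 : 0 ≤ a := ha ▸ Real.sqrt_nonneg _
  have ha2 : a ^ 2 = x ^ 2 - y ^ 2 := ha ▸ Real.sq_sqrt (by nlinarith)
  have hax : a ≤ x := by nlinarith
  have hend : Real.sqrt (x ^ 2 - a ^ 2) = y := by
    rw [show x ^ 2 - a ^ 2 = y ^ 2 by linarith, Real.sqrt_sq hy]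
  have hcont : Continuous fun t : ℝ => (erf (t + Real.sqrt (t ^ 2 - a ^ 2) * I)).re :=
    continuous_re.comp (differentiable_erf.continuous.comp (by fun_prop))
  have hftc := intervalIntegral.integral_eq_sub_of_hasDerivAt_of_le hax hcont.continuousOn
    (fun t ht => hasDerivAt_re_erf_hyperbola (by nlinarith [ht.1]))
    ((intervalIntegrable_cos_add_mul_sin_div a x (by fun_prop)).const_mul _)
  rw [intervalIntegral.integral_const_mul, hend] at hftc
  simp only [sub_self, Real.sqrt_zero, ofReal_zero, zero_mul, add_zero] at hftc
  linarith
end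

section
/- The complementary error function erfc has no zeros in the set S = {z ∈ ℂ \ {0} : |Arg z| ≥ 3π/4}. -/
/-!
The Gaussian integral `∫_ℝ e^{-(z+t)²} dt = √π` holds for every complex shift `z`, so
`erfc z = 2 - (2/√π) ∫_{-∞}^0 e^{-(z+t)²} dt`. The condition `|Arg z| ≥ 3π/4` means
`|Im z| ≤ -Re z`, and then `|e^{-(z+t)²}| = e^{(Im z)² - (Re z)² - 2 t Re z - t²} ≤ e^{-t²}` for
`t ≤ 0`. Hence the remaining integral has modulus at most `√π/2`, i.e. `|2 - erfc z| ≤ 1`.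
-/

open Complex MeasureTheory

open Real Set

lemma integral_cexp_neg_add_sq (z : ℂ) : ∫ t : ℝ, cexp (-(z + t) ^ 2) = √π := by
  have h := integral_cexp_quadratic (b := -1) (by simp) (-2 * z) (-z ^ 2)
  simp only [neg_neg, div_one] at h
  convert h using 1
  · congr 1 with t; congr 1; ring
  · rw [show -z ^ 2 - (-2 * z) ^ 2 / (4 * -1) = 0 by ring, Complex.exp_zero, mul_one,
      sqrt_eq_rpow, ofReal_cpow pi_pos.le]
    norm_num

lemma integrable_cexp_neg_add_sq (z : ℂ) : Integrable fun t : ℝ => cexp (-(z + t) ^ 2) := by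
  convert integrable_cexp_quadratic (b := 1) (by simp) (-2 * z) (-z ^ 2) using 3 with t
  ring

lemma integral_Iic_exp_neg_sq : ∫ t in Iic (0 : ℝ), rexp (-t ^ 2) = √π / 2 := by
  rw [← neg_zero, ← integral_comp_neg_Ioi]
  simpa [neg_sq] using integral_gaussian_Ioi 1

lemma norm_cexp_neg_add_sq_le {z : ℂ} (hz : |z.im| ≤ -z.re) {t : ℝ} (ht : t ≤ 0) :
    ‖cexp (-(z + t) ^ 2)‖ ≤ rexp (-t ^ 2) := by
  have hre : (-(z + t) ^ 2).re = z.im ^ 2 - z.re ^ 2 - 2 * z.re * t - t ^ 2 := by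
    simp only [neg_re, sq, mul_re, add_re, add_im, ofReal_re, ofReal_im]; ring
  rw [norm_exp, hre, exp_le_exp]
  have him : z.im ^ 2 ≤ z.re ^ 2 := by
    rw [← sq_abs z.im]; nlinarith [abs_nonneg z.im]
  nlinarith [abs_nonneg z.im]

lemma norm_setIntegral_Iic_cexp_neg_add_sq_le {z : ℂ} (hz : |z.im| ≤ -z.re) :
    ‖∫ t in Iic (0 : ℝ), cexp (-(z + t) ^ 2)‖ ≤ √π / 2 := by
  have hgauss : IntegrableOn (fun t : ℝ => rexp (-t ^ 2)) (Iic 0) := by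
    simpa using (integrable_exp_neg_mul_sq one_pos).integrableOn
  rw [← integral_Iic_exp_neg_sq]
  refine norm_integral_le_of_norm_le hgauss ?_
  filter_upwards [ae_restrict_mem measurableSet_Iic] with t ht
  exact norm_cexp_neg_add_sq_le hz ht

lemma erfc_eq_two_sub (z : ℂ) :
    erfc z = 2 - (2 / √π : ℝ) * ∫ t in Iic (0 : ℝ), cexp (-(z + t) ^ 2) := by
  have hsplit := intervalIntegral.integral_Iic_add_Ioi (b := 0)
    (integrable_cexp_neg_add_sq z).integrableOn (integrable_cexp_neg_add_sq z).integrableOn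
  rw [integral_cexp_neg_add_sq] at hsplit
  rw [erfc, eq_sub_of_add_eq' hsplit, mul_sub, ← ofReal_mul, div_mul_cancel₀ _ (by positivity)]
  push_cast; ring

lemma norm_two_sub_erfc_le_one {z : ℂ} (hz : |z.im| ≤ -z.re) : ‖2 - erfc z‖ ≤ 1 := by
  have hπ : 0 < √π := sqrt_pos.2 pi_pos
  rw [erfc_eq_two_sub, sub_sub_cancel, norm_mul, norm_real, norm_of_nonneg (by positivity)]
  calc 2 / √π * ‖∫ t in Iic (0 : ℝ), cexp (-(z + t) ^ 2)‖ ≤ 2 / √π * (√π / 2) := by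
        gcongr; exact norm_setIntegral_Iic_cexp_neg_add_sq_le hz
    _ = 1 := by field_simp

lemma abs_im_le_neg_re_of_three_pi_div_four_le_abs_arg {z : ℂ} (h : 3 * π / 4 ≤ |z.arg|) :
    |z.im| ≤ -z.re := by
  have hcos : Real.cos z.arg ≤ -(√2 / 2) := by
    rw [← Real.cos_abs, ← cos_pi_div_four, ← Real.cos_pi_sub, show π - π / 4 = 3 * π / 4 by ring]
    exact cos_le_cos_of_nonneg_of_le_pi (by positivity) (abs_arg_le_pi z) h
  have hsin : |Real.sin z.arg| ≤ -Real.cos z.arg := by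
    rw [← abs_of_nonpos (hcos.trans (neg_nonpos.2 (by positivity))), ← sq_le_sq, Real.sin_sq]
    nlinarith [sq_sqrt (show (0 : ℝ) ≤ 2 by norm_num), sqrt_nonneg 2]
  rw [← norm_mul_sin_arg, ← norm_mul_cos_arg, abs_mul, abs_norm, ← mul_neg]
  exact mul_le_mul_of_nonneg_left hsin (norm_nonneg z)

theorem erfc_ne_zero_general (z : ℂ) (harg : 3 * Real.pi / 4 ≤ |z.arg|) :
    erfc z ≠ 0 := by
  intro h
  have := norm_two_sub_erfc_le_one (abs_im_le_neg_re_of_three_pi_div_four_le_abs_arg harg)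
  norm_num [h] at this

theorem erfc_ne_zero (z : ℂ) (hz : z ≠ 0) (harg : 3 * Real.pi / 4 ≤ |z.arg|) :
    erfc z ≠ 0 :=
  erfc_ne_zero_general z harg
end

section
/- For z = x + iy with x > 0 and x² ≥ y², one has |erfc(z)| < e^{y²−x²} √(x²+y²)/(x²√π). In particular, if additionally x > √(2/π), then |erfc(z)| < 1. -/
open Complex MeasureTheory

open Set Filter


lemma re_aux (x y t : ℝ) : (-(((x:ℂ) + y*Complex.I) + (t:ℂ))^2).re = y^2 - (x+t)^2 := by
  simp [pow_two, Complex.add_re, Complex.add_im, Complex.mul_re, Complex.mul_im]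

lemma gauss_int (x : ℝ) : Integrable (fun t : ℝ => Real.exp (-(x + t)^2)) := by
  have h := (integrable_exp_neg_mul_sq (one_pos)).comp_add_right x
  simp only [neg_mul, one_mul] at h
  convert h using 2 with t
  ring_nf

lemma gauss_int' (x : ℝ) : Integrable (fun t : ℝ => (x + t) * Real.exp (-(x + t)^2)) := by
  have h := (integrable_mul_exp_neg_mul_sq (one_pos)).comp_add_right x
  simp only [neg_mul, one_mul] at h
  convert h using 2 with t
  ring_nf

lemma gauss_prim (x : ℝ) :
    ∫ t in Set.Ioi (0:ℝ), (x + t) * Real.exp (-(x + t)^2) = Real.exp (-x^2) / 2 := by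
  have := integral_Ioi_of_hasDerivAt_of_tendsto' (a := 0) (m := 0)
    (f := fun t : ℝ => -Real.exp (-(x+t)^2) / 2)
    (f' := fun t : ℝ => (x + t) * Real.exp (-(x + t)^2))
    (fun t _ => ?_) ((gauss_int' x).integrableOn) ?_
  · rw [this]; ring_nf
  · have h1 : HasDerivAt (fun t : ℝ => -(x+t)^2) (-(2*(x+t))) t := by
      have : HasDerivAt (fun t : ℝ => x + t) 1 t := (hasDerivAt_id t).const_add x
      simpa using ((this.fun_pow 2).fun_neg)
    have h2 := (h1.exp).fun_neg.div_const 2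
    exact h2.congr_deriv (by ring)
  · have hadd : Tendsto (fun t : ℝ => x + t) atTop atTop :=
      tendsto_atTop_add_const_left atTop x tendsto_id
    have h3 : Tendsto (fun t : ℝ => -(x+t)^2) atTop atBot := by
      apply tendsto_neg_atBot_iff.mpr
      exact (tendsto_pow_atTop (two_ne_zero)).comp hadd
    have h4 : Tendsto (fun t : ℝ => Real.exp (-(x+t)^2)) atTop (nhds 0) :=
      Real.tendsto_exp_atBot.comp h3
    simpa using (h4.neg.div_const 2)


lemma gauss_tail (x : ℝ) (hx : 0 < x) :
    ∫ t in Set.Ioi (0:ℝ), Real.exp (-(x + t)^2) < Real.exp (-x^2) / (2*x) := by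
  have hf : IntegrableOn (fun t : ℝ => Real.exp (-(x + t)^2)) (Set.Ioi 0) :=
    (gauss_int x).integrableOn
  have hh : IntegrableOn (fun t : ℝ => t * Real.exp (-(x + t)^2)) (Set.Ioi 0) := by
    have h1 := ((gauss_int' x).integrableOn (s := Set.Ioi 0)).sub (hf.const_mul x)
    refine h1.congr ?_
    refine Filter.Eventually.of_forall (fun t => ?_)
    simp only [Pi.sub_apply]
    ring
  have hpos : 0 < ∫ t in Set.Ioi (0:ℝ), t * Real.exp (-(x + t)^2) := by
    rw [setIntegral_pos_iff_support_of_nonneg_ae]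
    · have hsub : Set.Ioi (0:ℝ) ⊆ Function.support (fun t : ℝ => t * Real.exp (-(x + t)^2)) := by
        intro t ht
        have ht' : (0:ℝ) < t := ht
        simp only [Function.mem_support]
        positivity
      rw [Set.inter_eq_right.mpr hsub]
      simp
    · filter_upwards [ae_restrict_mem measurableSet_Ioi] with t ht
      have ht' : (0:ℝ) < t := ht
      positivity
    · exact hh
  have hsplit : (∫ t in Set.Ioi (0:ℝ), (x + t) * Real.exp (-(x + t)^2)) =
      x * (∫ t in Set.Ioi (0:ℝ), Real.exp (-(x + t)^2)) +
        ∫ t in Set.Ioi (0:ℝ), t * Real.exp (-(x + t)^2) := by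
    rw [← integral_const_mul, ← integral_add (hf.const_mul x) hh]
    congr 1 with t
    ring
  have hkey : x * (∫ t in Set.Ioi (0:ℝ), Real.exp (-(x + t)^2)) < Real.exp (-x^2) / 2 := by
    rw [← gauss_prim x, hsplit]
    linarith
  rw [← div_div, lt_div_iff₀ hx]
  linarith [hkey]

lemma erfc_strand (x y : ℝ) (hx : 0 < x) :
    ‖erfc (x + y * Complex.I)‖ <
      Real.exp (y ^ 2 - x ^ 2) / (x * Real.sqrt Real.pi) := by
  have hπ : 0 < Real.sqrt Real.pi := Real.sqrt_pos.mpr Real.pi_pos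
  have hc : (0:ℝ) < 2 / Real.sqrt Real.pi := by positivity
  have hnorm : ‖∫ t in Set.Ioi (0:ℝ),
      Complex.exp (-(((x:ℂ) + y*Complex.I) + (t : ℂ)) ^ 2)‖ ≤
      ∫ t in Set.Ioi (0:ℝ), Real.exp (y^2) * Real.exp (-(x + t)^2) := by
    refine (norm_integral_le_integral_norm _).trans_eq ?_
    congr 1 with t
    rw [Complex.norm_exp, re_aux, ← Real.exp_add]
    ring_nf
  have hint : ∫ t in Set.Ioi (0:ℝ), Real.exp (y^2) * Real.exp (-(x + t)^2) <
      Real.exp (y^2) * (Real.exp (-x^2) / (2*x)) := by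
    rw [integral_const_mul]
    exact mul_lt_mul_of_pos_left (gauss_tail x hx) (Real.exp_pos _)
  have habs : ‖erfc (x + y * Complex.I)‖ =
      (2 / Real.sqrt Real.pi) * ‖∫ t in Set.Ioi (0:ℝ),
        Complex.exp (-(((x:ℂ) + y*Complex.I) + (t : ℂ)) ^ 2)‖ := by
    rw [erfc, norm_mul]
    congr 1
    simp only [Complex.norm_real, Real.norm_eq_abs]
    exact abs_of_pos hc
  rw [habs]
  calc (2 / Real.sqrt Real.pi) * ‖∫ t in Set.Ioi (0:ℝ),
        Complex.exp (-(((x:ℂ) + y*Complex.I) + (t : ℂ)) ^ 2)‖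
      ≤ (2 / Real.sqrt Real.pi) * ∫ t in Set.Ioi (0:ℝ),
          Real.exp (y^2) * Real.exp (-(x + t)^2) := by
        exact mul_le_mul_of_nonneg_left hnorm hc.le
    _ < (2 / Real.sqrt Real.pi) * (Real.exp (y^2) * (Real.exp (-x^2) / (2*x))) :=
        mul_lt_mul_of_pos_left hint hc
    _ = Real.exp (y ^ 2 - x ^ 2) / (x * Real.sqrt Real.pi) := by
        rw [show y^2 - x^2 = y^2 + (-x^2) by ring, Real.exp_add]
        field_simp

theorem erfc_bound_combined (x y : ℝ) (hx : 0 < x) (hxy : y ^ 2 ≤ x ^ 2) :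
    ‖erfc (x + y * Complex.I)‖ <
      Real.exp (y ^ 2 - x ^ 2) * Real.sqrt (x ^ 2 + y ^ 2) / (x ^ 2 * Real.sqrt Real.pi) ∧
    (Real.sqrt (2 / Real.pi) < x → ‖erfc (x + y * Complex.I)‖ < 1) := by
  have hπ : 0 < Real.sqrt Real.pi := Real.sqrt_pos.mpr Real.pi_pos
  have hstrand := erfc_strand x y hx
  constructor
  · refine hstrand.trans_le ?_
    have hs : x ≤ Real.sqrt (x^2 + y^2) := by
      nth_rewrite 1 [show x = Real.sqrt (x^2) from (Real.sqrt_sq hx.le).symm]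
      exact Real.sqrt_le_sqrt (by nlinarith)
    calc Real.exp (y^2 - x^2) / (x * Real.sqrt Real.pi)
        = Real.exp (y^2 - x^2) * x / (x^2 * Real.sqrt Real.pi) := by
          field_simp
      _ ≤ Real.exp (y ^ 2 - x ^ 2) * Real.sqrt (x ^ 2 + y ^ 2) / (x ^ 2 * Real.sqrt Real.pi) := by
          gcongr
  · intro h
    refine hstrand.trans_le ?_
    have h1 : Real.exp (y^2 - x^2) ≤ 1 := Real.exp_le_one_iff.mpr (by linarith)
    have h2 : (1:ℝ) < x * Real.sqrt Real.pi := by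
      have hdiv : Real.sqrt (2/Real.pi) = Real.sqrt 2 / Real.sqrt Real.pi :=
        Real.sqrt_div (by norm_num) Real.pi
      rw [hdiv, div_lt_iff₀ hπ] at h
      have h12 : (1:ℝ) < Real.sqrt 2 := by
        nth_rewrite 1 [show (1:ℝ) = Real.sqrt 1 by simp]
        exact Real.sqrt_lt_sqrt (by norm_num) one_lt_two
      linarith
    rw [div_le_one (by positivity)]
    linarith
end
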